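/- arXiv:2505.12608 — 2 statements merged into one kernel-verified Lean document; each statement's English description precedes it below -/
import Mathlib

section
/- Let G=(V,E) be a finite directed graph, let s ∈ V, and let f : E → ℝ≥0 be a flow such that every vertex v ≠ s satisfies (inflow at v) − (outflow at v) = 1, while s satisfies (outflow at s) − (inflow at s) = |V| − 1. Then in the underlying undirected graph restricted to edges with nonzero flow, every vertex is connected to s; in particular the region is connected. -/
/-!
Let `T` be the set of vertices not connected to `s`. No edge of positive flow joins `T` to its
complement, and flows are nonnegative, so no flow at all crosses the cut: the net inflow summed
over `T` is zero. Since `s ∉ T`, that sum is also `#T`, hence `T` is empty.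
-/

open Finset

lemma SimpleGraph.reachable_fromRel_of_rel {V : Type*} {r : V → V → Prop} {u v : V} (h : r u v) :
    (fromRel r).Reachable u v := by
  by_cases huv : u = v
  · exact huv ▸ .refl u
  · exact (fromRel_adj r u v |>.mpr ⟨huv, .inl h⟩).reachable

section NetInflow

variable {V : Type*} [Fintype V]

def netInflow (f : V → V → ℝ) (v : V) : ℝ :=
  (∑ u, f u v) - ∑ u, f v u

lemma sum_netInflow_eq_sum_cut [DecidableEq V] (f : V → V → ℝ) (T : Finset V) :
    ∑ v ∈ T, netInflow f v = ∑ v ∈ T, ∑ u ∈ Tᶜ, (f u v - f v u) := by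
  have hinner : ∑ v ∈ T, ∑ u ∈ T, (f u v - f v u) = 0 := by
    simp_rw [sum_sub_distrib]
    rw [sum_comm, sub_self]
  simp_rw [netInflow, ← sum_sub_distrib, ← sum_add_sum_compl T, sum_add_distrib, hinner,
    zero_add]

lemma sum_netInflow_eq_zero_of_cut [DecidableEq V] (f : V → V → ℝ) (T : Finset V)
    (hcut : ∀ v ∈ T, ∀ u ∉ T, f u v = 0 ∧ f v u = 0) :
    ∑ v ∈ T, netInflow f v = 0 := by
  rw [sum_netInflow_eq_sum_cut]
  refine sum_eq_zero fun v hv => sum_eq_zero fun u hu => ?_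
  obtain ⟨hin, hout⟩ := hcut v hv u (mem_compl.mp hu)
  rw [hin, hout, sub_self]

end NetInflow

theorem flow_contiguity_general {V : Type*} [Fintype V] (s : V) (f : V → V → ℝ)
    (hnonneg : ∀ u v, 0 ≤ f u v)
    (hcons : ∀ v, v ≠ s → (∑ u, f u v) - (∑ u, f v u) = 1) :
    ∀ v : V, (SimpleGraph.fromRel (fun u w => 0 < f u w)).Reachable v s := by
  classical
  set G := SimpleGraph.fromRel (fun u w => 0 < f u w)
  set T : Finset V := univ.filter fun v => ¬ G.Reachable v s
  have hcut : ∀ v ∈ T, ∀ u ∉ T, f u v = 0 ∧ f v u = 0 := by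
    intro v hv u hu
    simp only [T, mem_filter, mem_univ, true_and, not_not] at hv hu
    refine ⟨?_, ?_⟩ <;> refine ((hnonneg _ _).eq_of_not_lt fun hpos => hv ?_).symm
    · exact (SimpleGraph.reachable_fromRel_of_rel (r := fun u w => 0 < f u w) hpos).symm.trans hu
    · exact (SimpleGraph.reachable_fromRel_of_rel (r := fun u w => 0 < f u w) hpos).trans hu
  have hsT : s ∉ T := by simp [T]
  have hunit : ∀ v ∈ T, netInflow f v = 1 := fun v hv => hcons v (ne_of_mem_of_not_mem hv hsT)
  have hcard : ∑ v ∈ T, netInflow f v = #T := by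
    rw [sum_congr rfl hunit]
    simp
  have hT : T = ∅ := by
    rw [← card_eq_zero]
    exact_mod_cast hcard.symm.trans (sum_netInflow_eq_zero_of_cut f T hcut)
  intro v
  by_contra hv
  exact (eq_empty_iff_forall_notMem.mp hT) v (by simpa [T] using hv)

/-- a flow with unit net inflow at every non-source vertex and
net outflow |V|-1 at the source connects every vertex to the source via
edges of nonzero flow (direction ignored). -/
theorem flow_contiguity {V : Type*} [Fintype V] (s : V) (f : V → V → ℝ)
    (hnonneg : ∀ u v, 0 ≤ f u v)
    (hcons : ∀ v, v ≠ s → (∑ u, f u v) - (∑ u, f v u) = 1)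
    (hsrc : (∑ u, f s u) - (∑ u, f u s) = (Fintype.card V : ℝ) - 1) :
    ∀ v : V, (SimpleGraph.fromRel (fun u w => 0 < f u w)).Reachable v s :=
  flow_contiguity_general s f hnonneg hcons
end

section
/- If a region r ⊆ V with designated root s admits a nonnegative flow f supported on edges internal to r such that each non-root vertex of r has net inflow 1 and s has net outflow |r| − 1, then the induced subgraph on r (with edges of positive flow, direction ignored) contains a spanning connected subgraph of r; in particular r has exactly one connected component. -/
/-!
Let `S` be the set of vertices of `r` that are not reachable from `s` along positive-flow edges.
No flow crosses the boundary of `S`, so the net inflows of the vertices of `S` sum to zero;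
since `s ∉ S`, each of them is `1`, hence `S` is empty.
-/

open Finset

section

variable {V : Type*} [Fintype V]

theorem sum_inflow_sub_outflow_eq_zero {M : Type*} [AddCommGroup M] (f : V → V → M)
    (S : Finset V) (hS : ∀ u v, f u v ≠ 0 → (u ∈ S ↔ v ∈ S)) :
    ∑ v ∈ S, ((∑ u, f u v) - ∑ u, f v u) = 0 := by
  have hin : ∀ v ∈ S, ∑ u, f u v = ∑ u ∈ S, f u v := fun v hv =>
    (sum_subset (subset_univ S) fun u _ hu => by_contra fun h => hu ((hS u v h).2 hv)).symm
  have hout : ∀ v ∈ S, ∑ u, f v u = ∑ u ∈ S, f v u := fun v hv =>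
    (sum_subset (subset_univ S) fun u _ hu => by_contra fun h => hu ((hS v u h).1 hv)).symm
  rw [sum_congr rfl fun v hv => by rw [hin v hv, hout v hv], sum_sub_distrib, sum_comm,
    sub_self]

theorem reachable_of_inflow_sub_outflow_eq_one {R : Type*} [Ring R] [CharZero R]
    (G : SimpleGraph V) (r : Finset V) (s : V) (f : V → V → R)
    (hsupp : ∀ u v, f u v ≠ 0 → u ∈ r ∧ v ∈ r)
    (hG : ∀ u v, f u v ≠ 0 → G.Reachable u v)
    (hcons : ∀ v ∈ r, v ≠ s → (∑ u, f u v) - (∑ u, f v u) = 1) :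
    ∀ v ∈ r, G.Reachable s v := by
  classical
  set S := r.filter fun v => ¬ G.Reachable s v
  have hclosed : ∀ u v, f u v ≠ 0 → (u ∈ S ↔ v ∈ S) := fun u v h => by
    have huv := hG u v h
    simp only [S, mem_filter, (hsupp u v h).1, (hsupp u v h).2, true_and]
    exact not_congr ⟨fun hu => hu.trans huv, fun hv => hv.trans huv.symm⟩
  have hone : ∑ v ∈ S, ((∑ u, f u v) - ∑ u, f v u) = S.card := by
    have hsS : s ∉ S := fun hs => (mem_filter.1 hs).2 (SimpleGraph.Reachable.refl s)
    rw [sum_congr rfl fun v hv => hcons v (mem_filter.1 hv).1 fun hvs => hsS (hvs ▸ hv),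
      sum_const, nsmul_one]
  have hS : S = ∅ := by
    rw [sum_inflow_sub_outflow_eq_zero f S hclosed] at hone
    exact card_eq_zero.1 (by exact_mod_cast hone.symm)
  exact fun v hv => not_not.1 (filter_eq_empty_iff.1 hS hv)

end

theorem region_connected_general {V : Type*} [Fintype V]
    (r : Finset V) (s : V)
    (f : V → V → ℝ) (hnonneg : ∀ u v, 0 ≤ f u v)
    (hsupp : ∀ u v, f u v ≠ 0 → u ∈ r ∧ v ∈ r)
    (hcons : ∀ v ∈ r, v ≠ s → (∑ u, f u v) - (∑ u, f v u) = 1) :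
    ∀ u ∈ r, ∀ v ∈ r,
      (SimpleGraph.fromRel (fun a b => 0 < f a b ∧ a ∈ r ∧ b ∈ r)).Reachable u v := by
  set G := SimpleGraph.fromRel (fun a b => 0 < f a b ∧ a ∈ r ∧ b ∈ r)
  have hG : ∀ u v, f u v ≠ 0 → G.Reachable u v := fun u v h => by
    by_cases huv : u = v
    · exact huv ▸ SimpleGraph.Reachable.refl u
    · exact SimpleGraph.Adj.reachable <| (SimpleGraph.fromRel_adj _ u v).2
        ⟨huv, .inl ⟨(hnonneg u v).lt_of_ne' h, hsupp u v h⟩⟩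
  have hroot := reachable_of_inflow_sub_outflow_eq_one G r s f hsupp hG hcons
  exact fun u hu v hv => (hroot u hu).symm.trans (hroot v hv)

/-- a region carrying an internal flow with unit net inflow at
non-root vertices and net outflow |r|−1 at the root is connected (via
positive-flow edges, direction ignored). -/
theorem region_connected {V : Type*} [Fintype V] [DecidableEq V]
    (r : Finset V) (hne : r.Nonempty) (s : V) (hs : s ∈ r)
    (f : V → V → ℝ) (hnonneg : ∀ u v, 0 ≤ f u v)
    (hsupp : ∀ u v, f u v ≠ 0 → u ∈ r ∧ v ∈ r)
    (hcons : ∀ v ∈ r, v ≠ s → (∑ u, f u v) - (∑ u, f v u) = 1)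
    (hsrc : (∑ u, f s u) - (∑ u, f u s) = (r.card : ℝ) - 1) :
    ∀ u ∈ r, ∀ v ∈ r,
      (SimpleGraph.fromRel (fun a b => 0 < f a b ∧ a ∈ r ∧ b ∈ r)).Reachable u v :=
  region_connected_general r s f hnonneg hsupp hcons
end
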